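/- arXiv:1502.04460 — 5 statements merged into one kernel-verified Lean document; each statement's English description precedes it below -/
import Mathlib

section
/- Let k be an algebraically closed field of characteristic not 2 and let q1, q2 be quadratic forms in 5 variables over k whose common zero locus X ⊂ P^4 is a smooth surface. Then for every [λ:μ] ∈ P^1(k) with det(λ·M1 + μ·M2) = 0, the matrix λ·M1 + μ·M2 has rank exactly 4; equivalently, the quadric λ·q1 + μ·q2 = 0 has a unique singular point. -/
/-!
If the kernel of a singular member `λ M₁ + μ M₂` of the pencil had dimension at least 2, the
restriction of `q₁` (of `q₂` when `μ = 0`) to it would be a binary quadratic form, which has a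
nontrivial zero over an algebraically closed field. Since `λ q₁ + μ q₂` vanishes on its own
kernel, that zero lies on `X`, and there `λ M₁ x + μ M₂ x = 0` contradicts smoothness. So the
kernel is a line: the rank is 4 and the quadric has exactly one singular point.
-/

open Matrix Module Polynomial

section

variable {k : Type*} [Field k]

theorem exists_ne_zero_binaryQuadratic_eq_zero [IsAlgClosed k] (a b c : k) :
    ∃ s t : k, ¬(s = 0 ∧ t = 0) ∧ a * s ^ 2 + b * s * t + c * t ^ 2 = 0 := by
  by_cases ha : a = 0
  · exact ⟨1, 0, by simp, by simp [ha]⟩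
  obtain ⟨r, hr⟩ := IsAlgClosed.exists_root (C a * X ^ 2 + C b * X + C c)
    (by rw [degree_quadratic ha]; decide)
  exact ⟨r, 1, by simp, by simpa using hr⟩

theorem Projectivization.existsUnique_rep_mem_of_finrank_eq_one {V : Type*} [AddCommGroup V]
    [Module k V] {W : Submodule k V} (hW : finrank k W = 1) :
    ∃! P : Projectivization k V, P.rep ∈ W := by
  have : FiniteDimensional k W := Module.finite_of_finrank_eq_succ hW
  have rep_mem_iff (P : Projectivization k V) : P.rep ∈ W ↔ P.submodule = W := by
    rw [← Submodule.span_singleton_le_iff_mem, ← P.submodule_eq]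
    exact ⟨fun h => Submodule.eq_of_le_of_finrank_eq h (P.finrank_submodule.trans hW.symm),
      le_of_eq⟩
  simp only [rep_mem_iff]
  exact ⟨mk'' W hW, submodule_mk'' W hW,
    fun P hP => submodule_injective (hP.trans (submodule_mk'' W hW).symm)⟩

variable {n : Type*} [Fintype n]

theorem Submodule.exists_ne_zero_dotProduct_mulVec_eq_zero [IsAlgClosed k] (N : Matrix n n k)
    {W : Submodule k (n → k)} (hW : 1 < finrank k W) :
    ∃ x ∈ W, x ≠ 0 ∧ x ⬝ᵥ N *ᵥ x = 0 := by
  obtain ⟨u, hu⟩ := finrank_pos_iff_exists_ne_zero.mp (zero_lt_one.trans hW)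
  obtain ⟨v, huv⟩ := exists_linearIndependent_pair_of_one_lt_finrank hW hu
  obtain ⟨s, t, hst, hzero⟩ := exists_ne_zero_binaryQuadratic_eq_zero
    ((u : n → k) ⬝ᵥ N *ᵥ u) ((u : n → k) ⬝ᵥ N *ᵥ v + (v : n → k) ⬝ᵥ N *ᵥ u)
    ((v : n → k) ⬝ᵥ N *ᵥ v)
  refine ⟨(s • u + t • v : W), (s • u + t • v).2, ?_, ?_⟩
  · rw [ne_eq, ZeroMemClass.coe_eq_zero]
    exact fun h => hst (LinearIndependent.pair_iff.mp huv s t h)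
  · rw [← hzero]
    simp only [Submodule.coe_add, Submodule.coe_smul, mulVec_add, mulVec_smul, dotProduct_add,
      add_dotProduct, dotProduct_smul, smul_dotProduct, smul_eq_mul]
    ring

theorem Matrix.rank_add_finrank_ker (A : Matrix n n k) :
    A.rank + finrank k (LinearMap.ker A.mulVecLin) = Fintype.card n := by
  rw [Matrix.rank, LinearMap.finrank_range_add_finrank_ker, Module.finrank_fintype_fun_eq_card]

theorem dotProduct_mulVec_smul_add_smul (lam mu : k) (M1 M2 : Matrix n n k) (x : n → k) :
    x ⬝ᵥ (lam • M1 + mu • M2) *ᵥ x = lam * (x ⬝ᵥ M1 *ᵥ x) + mu * (x ⬝ᵥ M2 *ᵥ x) := by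
  simp only [add_mulVec, smul_mulVec, dotProduct_add, dotProduct_smul, smul_eq_mul]

theorem finrank_ker_smul_add_smul_le_one [IsAlgClosed k] {M1 M2 : Matrix n n k}
    (hsmooth : ∀ x : n → k, x ≠ 0 → x ⬝ᵥ M1 *ᵥ x = 0 → x ⬝ᵥ M2 *ᵥ x = 0 →
      LinearIndependent k ![M1 *ᵥ x, M2 *ᵥ x])
    {lam mu : k} (hlm : ¬(lam = 0 ∧ mu = 0)) :
    finrank k (LinearMap.ker (lam • M1 + mu • M2).mulVecLin) ≤ 1 := by
  set M := lam • M1 + mu • M2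
  by_contra! hdim
  have not_on_X : ∀ x, M *ᵥ x = 0 → x ≠ 0 → x ⬝ᵥ M1 *ᵥ x = 0 → x ⬝ᵥ M2 *ᵥ x ≠ 0 := by
    intro x hMx hx h1 h2
    refine hlm (LinearIndependent.pair_iff.mp (hsmooth x hx h1 h2) lam mu ?_)
    rw [← smul_mulVec, ← smul_mulVec, ← add_mulVec]
    exact hMx
  have on_pencil : ∀ x, M *ᵥ x = 0 → lam * (x ⬝ᵥ M1 *ᵥ x) + mu * (x ⬝ᵥ M2 *ᵥ x) = 0 := by
    intro x hMx
    rw [← dotProduct_mulVec_smul_add_smul, hMx, dotProduct_zero]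
  by_cases hmu : mu = 0
  · have hlam : lam ≠ 0 := fun h => hlm ⟨h, hmu⟩
    obtain ⟨x, hMx, hx, h2⟩ := Submodule.exists_ne_zero_dotProduct_mulVec_eq_zero M2 hdim
    have h1 : x ⬝ᵥ M1 *ᵥ x = 0 := by simpa [hmu, hlam] using on_pencil x hMx
    exact not_on_X x hMx hx h1 h2
  · obtain ⟨x, hMx, hx, h1⟩ := Submodule.exists_ne_zero_dotProduct_mulVec_eq_zero M1 hdim
    have h2 : x ⬝ᵥ M2 *ᵥ x = 0 := by simpa [h1, hmu] using on_pencil x hMx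
    exact not_on_X x hMx hx h1 h2

end

theorem stmt1_general {k : Type*} [Field k] [IsAlgClosed k]
    (M1 M2 : Matrix (Fin 5) (Fin 5) k)
    (hsmooth : ∀ x : Fin 5 → k, x ≠ 0 → x ⬝ᵥ M1.mulVec x = 0 → x ⬝ᵥ M2.mulVec x = 0 →
      LinearIndependent k ![M1.mulVec x, M2.mulVec x]) :
    ∀ lam mu : k, ¬(lam = 0 ∧ mu = 0) → (lam • M1 + mu • M2).det = 0 →
      (lam • M1 + mu • M2).rank = 4 ∧
      ∃! P : Projectivization k (Fin 5 → k), (lam • M1 + mu • M2).mulVec P.rep = 0 := by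
  intro lam mu hlm hdet
  set M := lam • M1 + mu • M2
  obtain ⟨v, hv, hMv⟩ := exists_mulVec_eq_zero_iff.mpr hdet
  have hker : finrank k (LinearMap.ker M.mulVecLin) = 1 := by
    refine le_antisymm (finrank_ker_smul_add_smul_le_one hsmooth hlm) ?_
    exact finrank_pos_iff_exists_ne_zero.mpr ⟨⟨v, hMv⟩, fun h => hv (congrArg Subtype.val h)⟩
  refine ⟨?_, ?_⟩
  · have := M.rank_add_finrank_ker
    rw [hker, Fintype.card_fin] at this
    omega
  · simpa using Projectivization.existsUnique_rep_mem_of_finrank_eq_one hker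

/-- Over an algebraically closed field of characteristic not 2, if `X = {q₁ = q₂ = 0} ⊂ P⁴`
is a smooth surface, then every singular member of the pencil of quadrics has Gram matrix of
rank exactly 4; equivalently, the quadric `λ q₁ + μ q₂ = 0` has a unique singular point. -/
theorem stmt1 {k : Type*} [Field k] [IsAlgClosed k] (h2 : (2 : k) ≠ 0)
    (M1 M2 : Matrix (Fin 5) (Fin 5) k) (hs1 : M1.IsSymm) (hs2 : M2.IsSymm)
    (hsmooth : ∀ x : Fin 5 → k, x ≠ 0 → x ⬝ᵥ M1.mulVec x = 0 → x ⬝ᵥ M2.mulVec x = 0 →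
      LinearIndependent k ![M1.mulVec x, M2.mulVec x]) :
    ∀ lam mu : k, ¬(lam = 0 ∧ mu = 0) → (lam • M1 + mu • M2).det = 0 →
      (lam • M1 + mu • M2).rank = 4 ∧
      ∃! P : Projectivization k (Fin 5 → k), (lam • M1 + mu • M2).mulVec P.rep = 0 :=
  stmt1_general M1 M2 hsmooth
end

section
/- Let k be a field of characteristic not 2 and let q1, q2 be quadratic forms in 5 variables over k defining a smooth complete intersection surface X ⊂ P^4_k. Suppose all five roots of det(λM1 + μM2) in P^1(k̄) are k-rational. Then q1 and q2 are simultaneously diagonalizable over k: there exists an invertible matrix P ∈ GL_5(k) such that both P^T M1 P and P^T M2 P are diagonal. -/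
/-!
Over `k̄` the pencil has a nonsingular member `N = A + t B`: otherwise kernel vectors of
`card n + 1` distinct singular members would be pairwise orthogonal for both forms and, by
smoothness, not isotropic for both, hence linearly independent. The endomorphism `C = N⁻¹ B` is
self-adjoint for `N`, and smoothness makes its eigenvectors `N`-anisotropic. So `C` has no
nontrivial Jordan block (the image of a generalized eigenvector would be an isotropic eigenvector)
and its eigenspaces are lines (a plane over `k̄` contains an isotropic vector): `det (λ A + μ B)`
has `card n` distinct roots. Being `k`-rational, they give `card n` singular members over `k`, and
their kernel vectors, again orthogonal for both forms and anisotropic, form a basis that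
diagonalizes both forms at once.
-/

open Matrix Module

namespace Matrix

section Pencil

variable {F n : Type*} [Field F] [Fintype n] {A B : Matrix n n F}

lemma IsSymm.dotProduct_mulVec_comm {R : Type*} [CommSemiring R] {M : Matrix n n R}
    (hM : M.IsSymm) (x y : n → R) : x ⬝ᵥ M *ᵥ y = y ⬝ᵥ M *ᵥ x := by
  rw [← dotProduct_transpose_mulVec, hM.eq]

lemma dotProduct_smul_add_smul_mulVec (a b : F) (x y : n → F) :
    x ⬝ᵥ (a • A + b • B) *ᵥ y = a * (x ⬝ᵥ A *ᵥ y) + b * (x ⬝ᵥ B *ᵥ y) := by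
  simp only [add_mulVec, smul_mulVec, dotProduct_add, dotProduct_smul, smul_eq_mul]

lemma dotProduct_mulVec_eq_zero_of_mulVec_eq_zero (hA : A.IsSymm) (hB : B.IsSymm)
    {a b a' b' : F} (hne : a * b' - a' * b ≠ 0) {x y : n → F}
    (hx : (a • A + b • B) *ᵥ x = 0) (hy : (a' • A + b' • B) *ᵥ y = 0) :
    x ⬝ᵥ A *ᵥ y = 0 ∧ x ⬝ᵥ B *ᵥ y = 0 := by
  have hxy : a' * (x ⬝ᵥ A *ᵥ y) + b' * (x ⬝ᵥ B *ᵥ y) = 0 := by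
    rw [← dotProduct_smul_add_smul_mulVec, hy, dotProduct_zero]
  have hyx : a * (x ⬝ᵥ A *ᵥ y) + b * (x ⬝ᵥ B *ᵥ y) = 0 := by
    rw [hA.dotProduct_mulVec_comm, hB.dotProduct_mulVec_comm,
      ← dotProduct_smul_add_smul_mulVec, hx, dotProduct_zero]
  constructor
  · refine (mul_eq_zero.mp ?_).resolve_left hne
    linear_combination b' * hyx - b * hxy
  · refine (mul_eq_zero.mp ?_).resolve_left hne
    linear_combination a * hxy - a' * hyx

lemma mul_dotProduct_mulVec_self_eq_zero {ι : Type*} [Fintype ι] {M : Matrix n n F}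
    {v : ι → n → F} (horth : Pairwise fun i j => v i ⬝ᵥ M *ᵥ v j = 0) {c : ι → F}
    (hc : ∑ j, c j • v j = 0) (i : ι) : c i * (v i ⬝ᵥ M *ᵥ v i) = 0 := by
  have h : ∑ j, c j * (v i ⬝ᵥ M *ᵥ v j) = 0 := by
    simpa [mulVec_sum, dotProduct_sum, mulVec_smul] using congrArg (v i ⬝ᵥ M *ᵥ ·) hc
  rwa [Fintype.sum_eq_single i fun j hj => by rw [horth hj.symm, mul_zero]] at h

lemma dotProduct_mulVec_mulVec_of_transpose_mul_eq {R : Type*} [CommSemiring R]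
    {D N : Matrix n n R} (hD : Dᵀ * N = N * D) (u y : n → R) :
    (D *ᵥ u) ⬝ᵥ N *ᵥ y = u ⬝ᵥ N *ᵥ D *ᵥ y := by
  rw [← vecMul_transpose, ← dotProduct_mulVec, mulVec_mulVec, hD, ← mulVec_mulVec]

lemma mulVec_eq_zero_of_mulVec_mulVec_eq_zero {D N : Matrix n n F} (hD : Dᵀ * N = N * D)
    (hiso : ∀ x, x ≠ 0 → D *ᵥ x = 0 → x ⬝ᵥ N *ᵥ x ≠ 0) {u : n → F} (hu : D *ᵥ D *ᵥ u = 0) :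
    D *ᵥ u = 0 := by
  by_contra hDu
  exact hiso _ hDu hu <| by
    rw [dotProduct_mulVec_mulVec_of_transpose_mul_eq hD, hu, mulVec_zero, dotProduct_zero]

end Pencil

end Matrix

/-- The base locus of the pencil spanned by the quadrics `xᵀ A x` and `xᵀ B x` is smooth, by the
Jacobian criterion: the gradients `2 A x`, `2 B x` are independent at every nonzero common zero. -/
def IsSmoothPencil {F n : Type*} [Field F] [Fintype n] (A B : Matrix n n F) : Prop :=
  ∀ x : n → F, x ≠ 0 → x ⬝ᵥ A *ᵥ x = 0 → x ⬝ᵥ B *ᵥ x = 0 → LinearIndependent F ![A *ᵥ x, B *ᵥ x]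

/-- The points `(a i : b i)` of `ℙ¹` are pairwise distinct roots of `det (λ A + μ B)`. -/
structure IsDistinctPencilRoots {F n ι : Type*} [Field F] [Fintype n] [DecidableEq n]
    (A B : Matrix n n F) (a b : ι → F) : Prop where
  ne_zero : ∀ i, ¬(a i = 0 ∧ b i = 0)
  pairwise_ne : Pairwise fun i j => a i * b j - a j * b i ≠ 0
  det_eq_zero : ∀ i, (a i • A + b i • B).det = 0

namespace IsSmoothPencil

variable {F n : Type*} [Field F] [Fintype n] {A B : Matrix n n F}

lemma not_isotropic_of_mulVec_eq_zero (h : IsSmoothPencil A B) {a b : F}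
    (hab : ¬(a = 0 ∧ b = 0)) {x : n → F} (hx : x ≠ 0) (hker : (a • A + b • B) *ᵥ x = 0) :
    ¬(x ⬝ᵥ A *ᵥ x = 0 ∧ x ⬝ᵥ B *ᵥ x = 0) := fun ⟨hxA, hxB⟩ =>
  hab <| LinearIndependent.pair_iff.mp (h x hx hxA hxB) a b <| by
    rwa [add_mulVec, smul_mulVec, smul_mulVec] at hker

lemma linearIndependent (h : IsSmoothPencil A B) (hA : A.IsSymm) (hB : B.IsSymm)
    {ι : Type*} [Fintype ι] {a b : ι → F} (hab : ∀ i, ¬(a i = 0 ∧ b i = 0))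
    (hsep : Pairwise fun i j => a i * b j - a j * b i ≠ 0) {v : ι → n → F} (hv0 : ∀ i, v i ≠ 0)
    (hv : ∀ i, (a i • A + b i • B) *ᵥ v i = 0) : LinearIndependent F v := by
  have horth {i j : ι} (hij : i ≠ j) := dotProduct_mulVec_eq_zero_of_mulVec_eq_zero hA hB
    (hsep hij) (hv i) (hv j)
  refine Fintype.linearIndependent_iff.mpr fun c hc i => by_contra fun hci => ?_
  refine h.not_isotropic_of_mulVec_eq_zero (hab i) (hv0 i) (hv i) ⟨?_, ?_⟩
  · exact (mul_eq_zero.mp (mul_dotProduct_mulVec_self_eq_zero (fun _ _ hij => (horth hij).1)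
      hc i)).resolve_left hci
  · exact (mul_eq_zero.mp (mul_dotProduct_mulVec_self_eq_zero (fun _ _ hij => (horth hij).2)
      hc i)).resolve_left hci

variable [DecidableEq n]

lemma exists_det_add_smul_ne_zero [Infinite F] (h : IsSmoothPencil A B) (hA : A.IsSymm)
    (hB : B.IsSymm) : ∃ t : F, (A + t • B).det ≠ 0 := by
  by_contra! hsing
  let t : Fin (Fintype.card n + 1) → F := fun i => Infinite.natEmbedding F i
  have ht : Function.Injective t := (Infinite.natEmbedding F).injective.comp Fin.val_injective
  choose w hw0 hw using fun i => exists_mulVec_eq_zero_iff.mpr (hsing (t i))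
  have hli := h.linearIndependent hA hB (a := 1) (b := t) (by simp)
    (fun i j hij => by simpa [sub_eq_zero] using (ht.ne hij).symm) hw0 (by simpa using hw)
  simpa using hli.fintype_card_le_finrank

lemma exists_isUnit_det_isDiag (h : IsSmoothPencil A B) (hA : A.IsSymm) (hB : B.IsSymm)
    {a b : n → F} (hr : IsDistinctPencilRoots A B a b) :
    ∃ P : Matrix n n F, IsUnit P.det ∧ (Pᵀ * A * P).IsDiag ∧ (Pᵀ * B * P).IsDiag := by
  choose v hv0 hv using fun i => exists_mulVec_eq_zero_iff.mpr (hr.det_eq_zero i)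
  have hentry (M : Matrix n n F) (i j : n) : ((of v)ᵀᵀ * M * (of v)ᵀ) i j = v i ⬝ᵥ M *ᵥ v j := by
    rw [transpose_transpose, Matrix.mul_assoc, mul_apply']
    rfl
  refine ⟨(of v)ᵀ, ?_, fun i j hij => ?_, fun i j hij => ?_⟩
  · rw [det_transpose, ← isUnit_iff_isUnit_det, ← linearIndependent_rows_iff_isUnit]
    exact h.linearIndependent hA hB hr.ne_zero hr.pairwise_ne hv0 hv
  · exact (hentry A i j).trans
      (dotProduct_mulVec_eq_zero_of_mulVec_eq_zero hA hB (hr.pairwise_ne hij) (hv i) (hv j)).1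
  · exact (hentry B i j).trans
      (dotProduct_mulVec_eq_zero_of_mulVec_eq_zero hA hB (hr.pairwise_ne hij) (hv i) (hv j)).2

end IsSmoothPencil

namespace Matrix

variable {K n : Type*} [Field K] [Fintype n]

lemma exists_isotropic_smul_add_smul [IsAlgClosed K] (N : Matrix n n K) (u x : n → K) :
    ∃ a b : K, ¬(a = 0 ∧ b = 0) ∧ (a • u + b • x) ⬝ᵥ N *ᵥ (a • u + b • x) = 0 := by
  by_cases hu : u ⬝ᵥ N *ᵥ u = 0
  · exact ⟨1, 0, by simp, by simpa using hu⟩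
  obtain ⟨r, hr⟩ := IsAlgClosed.exists_root
    (.C (u ⬝ᵥ N *ᵥ u) * .X ^ 2 + .C (u ⬝ᵥ N *ᵥ x + x ⬝ᵥ N *ᵥ u) * .X + .C (x ⬝ᵥ N *ᵥ x))
    (by rw [Polynomial.degree_quadratic hu]; norm_num)
  refine ⟨r, 1, by simp, ?_⟩
  simp only [Polynomial.IsRoot, Polynomial.eval_add, Polynomial.eval_mul, Polynomial.eval_C,
    Polynomial.eval_pow, Polynomial.eval_X] at hr
  simp only [one_smul, mulVec_add, mulVec_smul, dotProduct_add, add_dotProduct, dotProduct_smul,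
    smul_dotProduct, smul_eq_mul]
  linear_combination hr

lemma finrank_le_one_of_anisotropic [IsAlgClosed K] (N : Matrix n n K) (S : Submodule K (n → K))
    (hS : ∀ x ∈ S, x ≠ 0 → x ⬝ᵥ N *ᵥ x ≠ 0) : finrank K S ≤ 1 := by
  by_cases hS0 : S = ⊥
  · subst hS0; simp
  obtain ⟨u, huS, hu0⟩ := (Submodule.ne_bot_iff S).mp hS0
  refine finrank_le_one ⟨u, huS⟩ fun ⟨x, hxS⟩ => ?_
  obtain ⟨a, b, hab, hiso⟩ := exists_isotropic_smul_add_smul N u x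
  have hcomb : a • u + b • x = 0 := by_contra fun hne =>
    hS _ (S.add_mem (S.smul_mem a huS) (S.smul_mem b hxS)) hne hiso
  have hb : b ≠ 0 := fun hb =>
    hab ⟨(smul_eq_zero.mp (by simpa [hb] using hcomb)).resolve_right hu0, hb⟩
  refine ⟨-(b⁻¹ * a), Subtype.ext ?_⟩
  have := congrArg (b⁻¹ • ·) hcomb
  simp only [smul_add, smul_smul, inv_mul_cancel₀ hb, one_smul, smul_zero] at this
  simpa [neg_smul] using (eq_neg_of_add_eq_zero_right this).symm

variable [DecidableEq n] {C N : Matrix n n K}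

lemma maxGenEigenspace_toLin'_eq_eigenspace (hCN : Cᵀ * N = N * C)
    (haniso : ∀ (σ : K) x, x ≠ 0 → C *ᵥ x = σ • x → x ⬝ᵥ N *ᵥ x ≠ 0) (σ : K) :
    Module.End.maxGenEigenspace (toLin' C) σ = Module.End.eigenspace (toLin' C) σ := by
  set D := C - σ • (1 : Matrix n n K)
  have hg : toLin' C - σ • 1 = toLin' D := by rw [map_sub, map_smul, toLin'_one]; rfl
  have hD : Dᵀ * N = N * D := by
    simp only [D, transpose_sub, transpose_smul, transpose_one, sub_mul, mul_sub, smul_mul,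
      Matrix.mul_smul, Matrix.one_mul, Matrix.mul_one, hCN]
  have hDiso (x : n → K) (hx : x ≠ 0) (hDx : D *ᵥ x = 0) : x ⬝ᵥ N *ᵥ x ≠ 0 :=
    haniso σ x hx (by simpa [D, sub_mulVec, sub_eq_zero, smul_mulVec] using hDx)
  have hker : LinearMap.ker (toLin' D ^ 1) = LinearMap.ker (toLin' D ^ (1 + 1)) := by
    refine le_antisymm (LinearMap.ker_le_ker_comp _ _) fun u hu => ?_
    simp only [pow_one, LinearMap.mem_ker, toLin'_apply] at hu ⊢
    exact mulVec_eq_zero_of_mulVec_mulVec_eq_zero hD hDiso hu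
  refine le_antisymm (fun x hx => ?_) Module.End.eigenspace_le_maxGenEigenspace
  obtain ⟨_ | k, hk⟩ := (Module.End.mem_maxGenEigenspace _ _ _).mp hx
  · simp_all
  · rw [Module.End.eigenspace_def, hg, ← pow_one (toLin' D), Module.End.ker_pow_constant hker k,
      add_comm]
    rwa [hg] at hk

lemma rootMultiplicity_charpoly_le_one [IsAlgClosed K] (hCN : Cᵀ * N = N * C)
    (haniso : ∀ (σ : K) x, x ≠ 0 → C *ᵥ x = σ • x → x ⬝ᵥ N *ᵥ x ≠ 0) (σ : K) :
    C.charpoly.rootMultiplicity σ ≤ 1 := by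
  rw [← charpoly_toLin', ← LinearMap.finrank_maxGenEigenspace_eq,
    maxGenEigenspace_toLin'_eq_eigenspace hCN haniso]
  exact finrank_le_one_of_anisotropic N _ fun x hx hx0 =>
    haniso σ x hx0 (by simpa using Module.End.mem_eigenspace_iff.mp hx)

lemma exists_injective_eigenvalues [IsAlgClosed K] (hCN : Cᵀ * N = N * C)
    (haniso : ∀ (σ : K) x, x ≠ 0 → C *ᵥ x = σ • x → x ⬝ᵥ N *ᵥ x ≠ 0) :
    ∃ σ : n → K, Function.Injective σ ∧ ∀ i, ∃ x ≠ 0, C *ᵥ x = σ i • x := by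
  classical
  have hnodup : C.charpoly.roots.Nodup := Multiset.nodup_iff_count_le_one.mpr fun σ => by
    rw [Polynomial.count_roots]
    exact rootMultiplicity_charpoly_le_one hCN haniso σ
  have hcard : Fintype.card n = Fintype.card C.charpoly.roots.toFinset := by
    rw [Fintype.card_coe, Multiset.toFinset_card_of_nodup hnodup,
      IsAlgClosed.card_roots_eq_natDegree, charpoly_natDegree_eq_dim]
  let e := Fintype.equivOfCardEq hcard
  refine ⟨fun i => e i, Subtype.val_injective.comp e.injective, fun i => ?_⟩
  have hev : Module.End.HasEigenvalue (toLin' C) (e i) := by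
    rw [Module.End.hasEigenvalue_iff_isRoot_charpoly, charpoly_toLin']
    exact (Polynomial.mem_roots (charpoly_monic C).ne_zero).mp (Multiset.mem_toFinset.mp (e i).2)
  obtain ⟨x, hx, hx0⟩ := hev.exists_hasEigenvector
  exact ⟨x, hx0, by simpa using Module.End.mem_eigenspace_iff.mp hx⟩

end Matrix

namespace IsSmoothPencil

variable {K n : Type*} [Field K] [Fintype n] [DecidableEq n] {A B : Matrix n n K}

theorem exists_isDistinctPencilRoots [IsAlgClosed K] (h : IsSmoothPencil A B) (hA : A.IsSymm)
    (hB : B.IsSymm) : ∃ a b : n → K, IsDistinctPencilRoots A B a b := by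
  obtain ⟨t, ht⟩ := h.exists_det_add_smul_ne_zero hA hB
  set N := A + t • B
  have hNs : N.IsSymm := hA.add (hB.smul t)
  set C := N⁻¹ * B
  have hNC : N * C = B := mul_nonsing_inv_cancel_left N B (isUnit_iff_ne_zero.mpr ht)
  have hCN : Cᵀ * N = N * C := by
    rw [← hNs.eq, ← transpose_mul, hNs.eq, hNC, hB.eq]
  have hker {σ : K} {x : n → K} (hx : C *ᵥ x = σ • x) :
      (σ • A + (σ * t - 1) • B) *ᵥ x = 0 := by
    have hmem : σ • A + (σ * t - 1) • B = σ • N - B := by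
      simp only [N, smul_add, smul_smul, sub_smul, one_smul]
      abel
    rw [hmem, sub_mulVec, smul_mulVec, ← hNC, ← mulVec_mulVec, hx, mulVec_smul, sub_self]
  have haniso (σ : K) (x : n → K) (hx0 : x ≠ 0) (hx : C *ᵥ x = σ • x) : x ⬝ᵥ N *ᵥ x ≠ 0 := by
    intro hxN
    have hxB : x ⬝ᵥ B *ᵥ x = 0 := by
      rw [← hNC, ← mulVec_mulVec, hx, mulVec_smul, dotProduct_smul, hxN, smul_zero]
    have hxA : x ⬝ᵥ A *ᵥ x = 0 := by simpa [N, add_mulVec, smul_mulVec, hxB] using hxN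
    exact h.not_isotropic_of_mulVec_eq_zero (a := σ) (b := σ * t - 1) (by simp +contextual)
      hx0 (hker hx) ⟨hxA, hxB⟩
  obtain ⟨σ, hσ, hev⟩ := exists_injective_eigenvalues hCN haniso
  choose x hx0 hx using hev
  refine ⟨σ, fun i => σ i * t - 1, ⟨fun i => by simp +contextual, fun i j hij => ?_,
    fun i => exists_mulVec_eq_zero_iff.mp ⟨x i, hx0 i, hker (hx i)⟩⟩⟩
  have : σ j - σ i ≠ 0 := sub_ne_zero.mpr (hσ.ne hij).symm
  convert this using 1
  ring

end IsSmoothPencil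

section Descent

variable {k K n ι : Type*} [Field k] [Field K] [Algebra k K] [Fintype n] {A B : Matrix n n k}

lemma IsSmoothPencil.of_map
    (h : IsSmoothPencil (A.map (algebraMap k K)) (B.map (algebraMap k K))) :
    IsSmoothPencil A B := by
  set f := algebraMap k K
  have hmap (M : Matrix n n k) (x : n → k) : M.map f *ᵥ (f ∘ x) = f ∘ (M *ᵥ x) :=
    funext fun i => (f.map_mulVec M x i).symm
  have hq (M : Matrix n n k) (x : n → k) (hx : x ⬝ᵥ M *ᵥ x = 0) :
      (f ∘ x) ⬝ᵥ M.map f *ᵥ (f ∘ x) = 0 := by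
    rw [hmap, ← f.map_dotProduct, hx, map_zero]
  intro x hx0 hxA hxB
  have hfx : f ∘ x ≠ 0 := fun h0 =>
    hx0 <| funext fun i => f.injective (by simpa using congrFun h0 i)
  have hli := h (f ∘ x) hfx (hq A x hxA) (hq B x hxB)
  rw [hmap, hmap, LinearIndependent.pair_iff] at hli
  refine LinearIndependent.pair_iff.mpr fun s u hsu => ?_
  have := hli (f s) (f u) (funext fun i => by simpa using congrArg f (congrFun hsu i))
  exact ⟨f.injective (by simpa using this.1), f.injective (by simpa using this.2)⟩

lemma IsDistinctPencilRoots.of_map [DecidableEq n] {a b : ι → K}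
    (hr : IsDistinctPencilRoots (A.map (algebraMap k K)) (B.map (algebraMap k K)) a b)
    {c : ι → K} {a' b' : ι → k} (hc : ∀ i, c i ≠ 0) (ha : ∀ i, a i = c i * algebraMap k K (a' i))
    (hb : ∀ i, b i = c i * algebraMap k K (b' i)) : IsDistinctPencilRoots A B a' b' where
  ne_zero i := fun ⟨ha0, hb0⟩ => hr.ne_zero i ⟨by simp [ha, ha0], by simp [hb, hb0]⟩
  pairwise_ne i j hij h0 := hr.pairwise_ne hij <| by
    have := congrArg (algebraMap k K) h0
    simp only [map_sub, map_mul, map_zero] at this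
    rw [ha, ha, hb, hb]
    linear_combination c i * c j * this
  det_eq_zero i := (algebraMap k K).injective <| by
    have hmem : a i • A.map (algebraMap k K) + b i • B.map (algebraMap k K) =
        c i • (a' i • A + b' i • B).map (algebraMap k K) := by
      ext
      simp [ha, hb]
      ring
    have := hr.det_eq_zero i
    rw [hmem, det_smul] at this
    rw [map_zero, RingHom.map_det, RingHom.mapMatrix_apply]
    exact (mul_eq_zero.mp this).resolve_left (pow_ne_zero _ (hc i))

end Descent

theorem stmt6_general {k : Type*} [Field k]
    (M1 M2 : Matrix (Fin 5) (Fin 5) k) (hs1 : M1.IsSymm) (hs2 : M2.IsSymm)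
    (hsmooth : ∀ x : Fin 5 → AlgebraicClosure k, x ≠ 0 →
      x ⬝ᵥ (M1.map (algebraMap k (AlgebraicClosure k))).mulVec x = 0 →
      x ⬝ᵥ (M2.map (algebraMap k (AlgebraicClosure k))).mulVec x = 0 →
      LinearIndependent (AlgebraicClosure k)
        ![(M1.map (algebraMap k (AlgebraicClosure k))).mulVec x,
          (M2.map (algebraMap k (AlgebraicClosure k))).mulVec x])
    (hrat : ∀ lam mu : AlgebraicClosure k, ¬(lam = 0 ∧ mu = 0) →
      (lam • M1.map (algebraMap k (AlgebraicClosure k)) +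
        mu • M2.map (algebraMap k (AlgebraicClosure k))).det = 0 →
      ∃ (c : AlgebraicClosure k) (lam' mu' : k), c ≠ 0 ∧
        lam = c * algebraMap k (AlgebraicClosure k) lam' ∧
        mu = c * algebraMap k (AlgebraicClosure k) mu') :
    ∃ P : Matrix (Fin 5) (Fin 5) k, IsUnit P.det ∧
      (Pᵀ * M1 * P).IsDiag ∧ (Pᵀ * M2 * P).IsDiag := by
  have hX : IsSmoothPencil (M1.map (algebraMap k (AlgebraicClosure k)))
      (M2.map (algebraMap k (AlgebraicClosure k))) := hsmooth
  obtain ⟨a, b, hr⟩ := hX.exists_isDistinctPencilRoots (hs1.map _) (hs2.map _)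
  choose c a' b' hc ha hb using fun i => hrat (a i) (b i) (hr.ne_zero i) (hr.det_eq_zero i)
  exact hX.of_map.exists_isUnit_det_isDiag hs1 hs2 (hr.of_map hc ha hb)

/-- Let `q₁, q₂` be quadratic forms in 5 variables over a field `k` of characteristic not 2
defining a smooth complete intersection surface `X ⊂ P⁴_k`.  If all five roots of
`det (λ M₁ + μ M₂)` in `P¹(k̄)` are `k`-rational, then `q₁` and `q₂` are simultaneously
diagonalizable over `k`: there is `P ∈ GL₅(k)` with `Pᵀ M₁ P` and `Pᵀ M₂ P` both diagonal. -/
theorem stmt6 {k : Type*} [Field k] (h2 : (2 : k) ≠ 0)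
    (M1 M2 : Matrix (Fin 5) (Fin 5) k) (hs1 : M1.IsSymm) (hs2 : M2.IsSymm)
    (hsmooth : ∀ x : Fin 5 → AlgebraicClosure k, x ≠ 0 →
      x ⬝ᵥ (M1.map (algebraMap k (AlgebraicClosure k))).mulVec x = 0 →
      x ⬝ᵥ (M2.map (algebraMap k (AlgebraicClosure k))).mulVec x = 0 →
      LinearIndependent (AlgebraicClosure k)
        ![(M1.map (algebraMap k (AlgebraicClosure k))).mulVec x,
          (M2.map (algebraMap k (AlgebraicClosure k))).mulVec x])
    (hrat : ∀ lam mu : AlgebraicClosure k, ¬(lam = 0 ∧ mu = 0) →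
      (lam • M1.map (algebraMap k (AlgebraicClosure k)) +
        mu • M2.map (algebraMap k (AlgebraicClosure k))).det = 0 →
      ∃ (c : AlgebraicClosure k) (lam' mu' : k), c ≠ 0 ∧
        lam = c * algebraMap k (AlgebraicClosure k) lam' ∧
        mu = c * algebraMap k (AlgebraicClosure k) mu') :
    ∃ P : Matrix (Fin 5) (Fin 5) k, IsUnit P.det ∧
      (Pᵀ * M1 * P).IsDiag ∧ (Pᵀ * M2 * P).IsDiag :=
  stmt6_general M1 M2 hs1 hs2 hsmooth hrat
end

section
/- Let k be an algebraically closed field of characteristic not 2 and q1, q2 quadratic forms in 5 variables whose common zero locus X ⊂ P^4 is a smooth surface. Let P_0, ..., P_4 ∈ P^4(k) be the singular points of the five singular members of the pencil of quadrics through X. Then the corresponding five vectors in k^5 form a basis of k^5; in particular no P_i lies on X, and any four of the P_i span a hyperplane. -/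
open Matrix

private lemma sum_smul_dotProduct {k : Type*} [CommRing k] {ι n : Type*} [Fintype ι]
    [Fintype n] (g : ι → k) (v : ι → n → k) (w : n → k) :
    (∑ j, g j • v j) ⬝ᵥ w = ∑ j, g j * (v j ⬝ᵥ w) := by
  simp only [dotProduct, Finset.sum_apply, Pi.smul_apply, smul_eq_mul,
    Finset.sum_mul, Finset.mul_sum, mul_assoc]
  rw [Finset.sum_comm]

/-- Over an algebraically closed field `k` of characteristic not 2, let
`X = {q₁ = q₂ = 0} ⊂ P⁴` be a smooth surface, and let `P₀, …, P₄` (with homogeneous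
coordinate vectors `v 0, …, v 4`) be the singular points of the five singular members
(at the pairwise distinct roots `r i` of `det (λ M₁ + μ M₂)`) of the pencil of quadrics
through `X`.  Then `v 0, …, v 4` form a basis of `k⁵`; in particular no `Pᵢ` lies on `X`,
and any four of the `Pᵢ` span a hyperplane. -/
theorem stmt8 {k : Type*} [Field k] [IsAlgClosed k] (h2 : (2 : k) ≠ 0)
    (M1 M2 : Matrix (Fin 5) (Fin 5) k) (hs1 : M1.IsSymm) (hs2 : M2.IsSymm)
    (hsmooth : ∀ x : Fin 5 → k, x ≠ 0 → x ⬝ᵥ M1.mulVec x = 0 → x ⬝ᵥ M2.mulVec x = 0 →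
      LinearIndependent k ![M1.mulVec x, M2.mulVec x])
    (r : Fin 5 → k × k) (hr0 : ∀ i, r i ≠ 0)
    (hroot : ∀ i, ((r i).1 • M1 + (r i).2 • M2).det = 0)
    (hdist : ∀ i j, i ≠ j → (r i).1 * (r j).2 ≠ (r j).1 * (r i).2)
    (v : Fin 5 → Fin 5 → k) (hv : ∀ i, v i ≠ 0)
    (hker : ∀ i, ((r i).1 • M1 + (r i).2 • M2).mulVec (v i) = 0) :
    LinearIndependent k v ∧
    (∀ i, ¬(v i ⬝ᵥ M1.mulVec (v i) = 0 ∧ v i ⬝ᵥ M2.mulVec (v i) = 0)) ∧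
    (∀ i : Fin 5, Module.finrank k
      (Submodule.span k (v '' {j | j ≠ i} : Set (Fin 5 → k))) = 4) := by
  have hker' : ∀ i, (r i).1 • M1.mulVec (v i) + (r i).2 • M2.mulVec (v i) = 0 := by
    intro i
    have := hker i
    rwa [add_mulVec, smul_mulVec, smul_mulVec] at this
  have hsym : ∀ (M : Matrix (Fin 5) (Fin 5) k), M.IsSymm → ∀ x y : Fin 5 → k,
      x ⬝ᵥ M.mulVec y = y ⬝ᵥ M.mulVec x := by
    intro M hM x y
    rw [dotProduct_mulVec, ← hM, vecMul_transpose, hM, dotProduct_comm]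
  -- no P_i lies on X
  have hX : ∀ i, ¬(v i ⬝ᵥ M1.mulVec (v i) = 0 ∧ v i ⬝ᵥ M2.mulVec (v i) = 0) := by
    rintro i ⟨h1, h2⟩
    have hli := hsmooth (v i) (hv i) h1 h2
    rw [linearIndependent_fin2] at hli
    simp only [Matrix.cons_val_zero, Matrix.cons_val_one, Matrix.head_cons] at hli
    have hab : (r i).1 ≠ 0 ∨ (r i).2 ≠ 0 := by
      by_contra h
      push_neg at h
      exact hr0 i (Prod.ext h.1 h.2)
    rcases eq_or_ne (r i).1 0 with ha | ha
    · have hb : (r i).2 ≠ 0 := hab.resolve_left (by simp [ha])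
      have h := hker' i
      rw [ha, zero_smul, zero_add] at h
      exact hli.1 ((smul_eq_zero.mp h).resolve_left hb)
    · have hA : (r i).1 • M1.mulVec (v i) = -((r i).2 • M2.mulVec (v i)) := by
        rw [eq_neg_iff_add_eq_zero]
        exact hker' i
      have heq : M1.mulVec (v i) = (-((r i).1⁻¹ * (r i).2)) • M2.mulVec (v i) := by
        calc M1.mulVec (v i) = (r i).1⁻¹ • ((r i).1 • M1.mulVec (v i)) := by
              rw [inv_smul_smul₀ ha]
          _ = (-((r i).1⁻¹ * (r i).2)) • M2.mulVec (v i) := by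
              rw [hA, smul_neg, smul_smul, neg_smul]
      exact hli.2 (-((r i).1⁻¹ * (r i).2)) heq.symm
  -- bilinear orthogonality off the diagonal
  have hoff : ∀ i j, i ≠ j →
      v i ⬝ᵥ M1.mulVec (v j) = 0 ∧ v i ⬝ᵥ M2.mulVec (v j) = 0 := by
    intro i j hij
    have e1 : (r j).1 * (v i ⬝ᵥ M1.mulVec (v j)) + (r j).2 * (v i ⬝ᵥ M2.mulVec (v j)) = 0 := by
      have := congrArg (fun w => v i ⬝ᵥ w) (hker' j)
      simpa [dotProduct_add, dotProduct_smul, smul_eq_mul] using this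
    have e2 : (r i).1 * (v i ⬝ᵥ M1.mulVec (v j)) + (r i).2 * (v i ⬝ᵥ M2.mulVec (v j)) = 0 := by
      have := congrArg (fun w => v j ⬝ᵥ w) (hker' i)
      simp only [dotProduct_add, dotProduct_smul, smul_eq_mul, dotProduct_zero] at this
      rwa [hsym M1 hs1, hsym M2 hs2] at this
    have hd : (r i).1 * (r j).2 - (r j).1 * (r i).2 ≠ 0 := sub_ne_zero.mpr (hdist i j hij)
    constructor
    · have h : ((r i).1 * (r j).2 - (r j).1 * (r i).2) * (v i ⬝ᵥ M1.mulVec (v j)) = 0 := by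
        linear_combination (r j).2 * e2 - (r i).2 * e1
      exact (mul_eq_zero.mp h).resolve_left hd
    · have h : ((r i).1 * (r j).2 - (r j).1 * (r i).2) * (v i ⬝ᵥ M2.mulVec (v j)) = 0 := by
        linear_combination (r i).1 * e1 - (r j).1 * e2
      exact (mul_eq_zero.mp h).resolve_left hd
  have hli : LinearIndependent k v := by
    rw [Fintype.linearIndependent_iff]
    intro g hg i
    have key1 : g i * (v i ⬝ᵥ M1.mulVec (v i)) = 0 := by
      have h := congrArg (fun w => w ⬝ᵥ M1.mulVec (v i)) hg
      simp only [sum_smul_dotProduct, zero_dotProduct] at h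
      rwa [Finset.sum_eq_single i
        (fun j _ hji => by rw [(hoff j i hji).1, mul_zero]) (by simp)] at h
    have key2 : g i * (v i ⬝ᵥ M2.mulVec (v i)) = 0 := by
      have h := congrArg (fun w => w ⬝ᵥ M2.mulVec (v i)) hg
      simp only [sum_smul_dotProduct, zero_dotProduct] at h
      rwa [Finset.sum_eq_single i
        (fun j _ hji => by rw [(hoff j i hji).2, mul_zero]) (by simp)] at h
    by_contra hgi
    exact hX i ⟨(mul_eq_zero.mp key1).resolve_left hgi,
      (mul_eq_zero.mp key2).resolve_left hgi⟩
  refine ⟨hli, hX, fun i => ?_⟩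
  have hcomp := hli.comp (Subtype.val : {j : Fin 5 // j ≠ i} → Fin 5) Subtype.val_injective
  have hrange : Set.range (v ∘ (Subtype.val : {j : Fin 5 // j ≠ i} → Fin 5))
      = v '' {j | j ≠ i} := by
    rw [Set.range_comp]
    congr 1
    ext j
    simp
  have hcard : Fintype.card {j : Fin 5 // j ≠ i} = 4 := by
    simp [Fintype.card_subtype_compl]
  rw [← hrange, finrank_span_eq_card hcomp, hcard]
end

section
/- Let k be a field of characteristic not 2 and let q be a quadratic form in 5 variables over k of rank 4, with singular point P of the quadric Q = {q = 0} ⊂ P^4. Let X ⊂ Q be a smooth surface which is a complete intersection of two quadrics with Q in their pencil. Then P does not lie on X. -/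
open Matrix

/-- Let `q = lam·q₁ + mu·q₂` be a rank-4 member of the pencil through a smooth complete
intersection surface `X = {q₁ = q₂ = 0} ⊂ P⁴_k` of two quadrics (char `k ≠ 2`), and let
`P` (with coordinate vector `v`) be the singular point of the quadric `{q = 0}`.
Then `P` does not lie on `X`: `q₁(v) ≠ 0` or `q₂(v) ≠ 0`. -/
theorem stmt13 {k : Type*} [Field k] (h2 : (2 : k) ≠ 0)
    (M1 M2 : Matrix (Fin 5) (Fin 5) k) (hs1 : M1.IsSymm) (hs2 : M2.IsSymm)
    (hsmooth : ∀ x : Fin 5 → AlgebraicClosure k, x ≠ 0 →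
      x ⬝ᵥ (M1.map (algebraMap k (AlgebraicClosure k))).mulVec x = 0 →
      x ⬝ᵥ (M2.map (algebraMap k (AlgebraicClosure k))).mulVec x = 0 →
      LinearIndependent (AlgebraicClosure k)
        ![(M1.map (algebraMap k (AlgebraicClosure k))).mulVec x,
          (M2.map (algebraMap k (AlgebraicClosure k))).mulVec x])
    (lam mu : AlgebraicClosure k) (hlm : ¬(lam = 0 ∧ mu = 0))
    (hrk : (lam • M1.map (algebraMap k (AlgebraicClosure k)) +
      mu • M2.map (algebraMap k (AlgebraicClosure k))).rank = 4)
    (v : Fin 5 → AlgebraicClosure k) (hv : v ≠ 0)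
    (hker : (lam • M1.map (algebraMap k (AlgebraicClosure k)) +
      mu • M2.map (algebraMap k (AlgebraicClosure k))).mulVec v = 0) :
    ¬(v ⬝ᵥ (M1.map (algebraMap k (AlgebraicClosure k))).mulVec v = 0 ∧
      v ⬝ᵥ (M2.map (algebraMap k (AlgebraicClosure k))).mulVec v = 0) := by
  rintro ⟨h1, h2'⟩
  have li := hsmooth v hv h1 h2'
  rw [Fintype.linearIndependent_iff] at li
  have hsum : ∑ i : Fin 2, ![lam, mu] i •
      ![(M1.map (algebraMap k (AlgebraicClosure k))).mulVec v,
        (M2.map (algebraMap k (AlgebraicClosure k))).mulVec v] i = 0 := by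
    simpa [Fin.sum_univ_two, add_mulVec, smul_mulVec] using hker
  have := li ![lam, mu] hsum
  exact hlm ⟨this 0, this 1⟩
end

section
/- Let K/k be a finite extension of fields of odd degree, char k ≠ 2, and let q be a nondegenerate quadratic form over k. If q is isotropic over K, then q is isotropic over k (Springer's theorem). -/
/-!
Going up the tower `k ⊆ k⟮α⟯ ⊆ K` and inducting on `[K : k]` reduces the theorem to simple
extensions `k[X]/(p)`, `p` monic irreducible of odd degree `d`. Normalise an isotropic vector there
to have a coordinate `1` and lift it to polynomials `f i` of degree `< d`, so `p ∣ Q(f)`. Either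
the vector of top coefficients `(f i).coeff e` (`e` the largest degree) is isotropic over `k`, or
`Q(f)` has degree exactly `2e < 2d`; then `Q(f) = p g` with `deg g = 2e - d` odd and `< d`, and an
odd-degree irreducible factor `h` of `g` makes `f` isotropic modulo `h`, which is an instance
of the same problem of smaller degree.
-/

universe u

open Matrix Polynomial

namespace Matrix

variable {n : Type*} [Fintype n]

theorem _root_.RingHom.map_quadForm {R S : Type*} [CommSemiring R] [CommSemiring S]
    (f : R →+* S) (M : Matrix n n R) (v : n → R) :
    f (v ⬝ᵥ M *ᵥ v) = (f ∘ v) ⬝ᵥ M.map f *ᵥ (f ∘ v) := by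
  rw [RingHom.map_dotProduct]
  congr 1
  funext i
  exact RingHom.map_mulVec f M v i

theorem quadForm_eq_sum {R : Type*} [CommSemiring R] (M : Matrix n n R) (v : n → R) :
    v ⬝ᵥ M *ᵥ v = ∑ i, ∑ j, M i j * (v i * v j) := by
  simp only [dotProduct, mulVec, Finset.mul_sum]
  exact Finset.sum_congr rfl fun i _ ↦ Finset.sum_congr rfl fun j _ ↦ by ring

def IsotropicOver {k : Type*} [CommSemiring k] (M : Matrix n n k) (A : Type*) [CommSemiring A]
    [Algebra k A] : Prop :=
  ∃ w : n → A, w ≠ 0 ∧ w ⬝ᵥ M.map (algebraMap k A) *ᵥ w = 0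

section IsotropicOver

variable {k A B : Type*} [CommSemiring k] [CommSemiring A] [CommSemiring B]
  [Algebra k A] [Algebra k B] {M : Matrix n n k}

theorem isotropicOver_self_iff :
    M.IsotropicOver k ↔ ∃ v : n → k, v ≠ 0 ∧ v ⬝ᵥ M *ᵥ v = 0 := by
  simp [IsotropicOver]

theorem IsotropicOver.map (h : M.IsotropicOver A) (f : A →ₐ[k] B) (hf : Function.Injective f) :
    M.IsotropicOver B := by
  obtain ⟨w, hw0, hwq⟩ := h
  refine ⟨f ∘ w, fun h ↦ hw0 (funext fun i ↦ hf (by simpa using congrFun h i)), ?_⟩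
  have hmap : (M.map (algebraMap k A)).map f = M.map (algebraMap k B) := by
    rw [Matrix.map_map, ← AlgHom.coe_toRingHom, ← RingHom.coe_comp, f.comp_algebraMap]
  rw [← hmap]
  exact ((f : A →+* B).map_quadForm _ w).symm.trans (by rw [hwq, map_zero])

theorem isotropicOver_map_algebraMap_iff (L : Type*) [CommSemiring L] [Algebra k L] [Algebra L A]
    [IsScalarTower k L A] : (M.map (algebraMap k L)).IsotropicOver A ↔ M.IsotropicOver A := by
  simp only [IsotropicOver, Matrix.map_map, ← RingHom.coe_comp, ← IsScalarTower.algebraMap_eq]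

theorem IsotropicOver.exists_eq_one {A : Type*} [Field A] [Algebra k A] (h : M.IsotropicOver A) :
    ∃ w : n → A, (∃ i, w i = 1) ∧ w ⬝ᵥ M.map (algebraMap k A) *ᵥ w = 0 := by
  obtain ⟨w, hw0, hwq⟩ := h
  obtain ⟨i, hi⟩ := Function.ne_iff.mp hw0
  refine ⟨(w i)⁻¹ • w, ⟨i, inv_mul_cancel₀ hi⟩, ?_⟩
  rw [mulVec_smul, dotProduct_smul, smul_dotProduct, hwq, smul_zero, smul_zero]

end IsotropicOver

end Matrix

namespace Polynomial

theorem exists_monic_irreducible_dvd_of_odd_natDegree {k : Type*} [Field k] {g : k[X]}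
    (hg : Odd g.natDegree) :
    ∃ h : k[X], h.Monic ∧ Irreducible h ∧ h ∣ g ∧ Odd h.natDegree := by
  induction hd : g.natDegree using Nat.strong_induction_on generalizing g with
  | _ d ih =>
  obtain ⟨h, hmon, hirr, g', rfl⟩ :=
    exists_monic_irreducible_factor g (not_isUnit_of_natDegree_pos _ hg.pos)
  by_cases hh : Odd h.natDegree
  · exact ⟨h, hmon, hirr, dvd_mul_right h g', hh⟩
  have hg' : g' ≠ 0 := by rintro rfl; simp at hg
  rw [natDegree_mul hirr.ne_zero hg'] at hd hg
  obtain ⟨h', hmon', hirr', hdvd, hodd⟩ :=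
    ih g'.natDegree (by have := hirr.natDegree_pos; omega)
      (by simpa [Nat.odd_add, hh] using hg) rfl
  exact ⟨h', hmon', hirr', hdvd.mul_left h, hodd⟩

variable {n R : Type*} [Fintype n] [CommRing R] {M : Matrix n n R} {f : n → R[X]} {e : ℕ}

theorem natDegree_quadForm_map_C_le (hf : ∀ i, (f i).natDegree ≤ e) :
    (f ⬝ᵥ M.map C *ᵥ f).natDegree ≤ e + e := by
  rw [quadForm_eq_sum]
  refine natDegree_sum_le_of_forall_le _ _ fun i _ ↦
    natDegree_sum_le_of_forall_le _ _ fun j _ ↦ ?_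
  exact (natDegree_C_mul_le _ _).trans (natDegree_mul_le.trans (add_le_add (hf i) (hf j)))

theorem coeff_quadForm_map_C (hf : ∀ i, (f i).natDegree ≤ e) :
    (f ⬝ᵥ M.map C *ᵥ f).coeff (e + e) =
      (fun i ↦ (f i).coeff e) ⬝ᵥ M *ᵥ fun i ↦ (f i).coeff e := by
  simp only [quadForm_eq_sum, finsetSum_coeff, Matrix.map_apply, coeff_C_mul,
    coeff_mul_add_eq_of_natDegree_le (hf _) (hf _)]

theorem natDegree_quadForm_map_C (hf : ∀ i, (f i).natDegree ≤ e)
    (hc : (fun i ↦ (f i).coeff e) ⬝ᵥ M *ᵥ (fun i ↦ (f i).coeff e) ≠ 0) :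
    (f ⬝ᵥ M.map C *ᵥ f).natDegree = e + e :=
  natDegree_eq_of_le_of_coeff_ne_zero (natDegree_quadForm_map_C_le hf)
    (by rwa [coeff_quadForm_map_C hf])

end Polynomial

theorem AdjoinRoot.mk_quadForm_map_C {n R : Type*} [Fintype n] [CommRing R] (p : R[X])
    (M : Matrix n n R) (f : n → R[X]) :
    mk p (f ⬝ᵥ M.map C *ᵥ f) =
      (mk p ∘ f) ⬝ᵥ M.map (algebraMap R (AdjoinRoot p)) *ᵥ (mk p ∘ f) := by
  rw [RingHom.map_quadForm, Matrix.map_map]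
  rfl

namespace Matrix

variable {n : Type*} [Fintype n]

theorem isotropicOver_adjoinRoot_of_dvd {R : Type*} [CommRing R] {M : Matrix n n R} {p : R[X]}
    (f : n → R[X]) (hf : ∃ i, ¬p ∣ f i) (hQ : p ∣ f ⬝ᵥ M.map C *ᵥ f) :
    M.IsotropicOver (AdjoinRoot p) := by
  obtain ⟨i, hi⟩ := hf
  refine ⟨AdjoinRoot.mk p ∘ f, fun h ↦ hi (AdjoinRoot.mk_eq_zero.mp (congrFun h i)), ?_⟩
  rw [← AdjoinRoot.mk_quadForm_map_C, AdjoinRoot.mk_eq_zero.mpr hQ]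

variable {k : Type*} [Field k] {M : Matrix n n k}

theorem IsotropicOver.exists_lift {p : k[X]} (hp : p.Monic) (hirr : Irreducible p)
    (h : M.IsotropicOver (AdjoinRoot p)) :
    ∃ f : n → k[X], (∀ i, (f i).natDegree < p.natDegree) ∧ (∃ i, f i = 1) ∧
      p ∣ f ⬝ᵥ M.map C *ᵥ f := by
  have := Fact.mk hirr
  obtain ⟨w, ⟨i, hi⟩, hwq⟩ := h.exists_eq_one
  refine ⟨AdjoinRoot.modByMonicHom hp ∘ w, fun j ↦ ?_, ⟨i, ?_⟩, ?_⟩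
  · obtain ⟨g, hg⟩ := AdjoinRoot.mk_surjective (w j)
    simpa [← hg, AdjoinRoot.modByMonicHom_mk] using natDegree_modByMonic_lt g hp hirr.ne_one
  · rw [Function.comp_apply, hi, ← map_one (AdjoinRoot.mk p), AdjoinRoot.modByMonicHom_mk,
      modByMonic_eq_self_iff hp, degree_one]
    exact degree_pos_of_irreducible hirr
  · rw [← AdjoinRoot.mk_eq_zero, AdjoinRoot.mk_quadForm_map_C]
    rwa [show AdjoinRoot.mk p ∘ AdjoinRoot.modByMonicHom hp ∘ w = w from
      funext fun j ↦ AdjoinRoot.mk_leftInverse hp (w j)]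

theorem isotropicOver_or_exists_isotropicOver_adjoinRoot_lt {p : k[X]} (hodd : Odd p.natDegree)
    (f : n → k[X]) (hdeg : ∀ i, (f i).natDegree < p.natDegree) (hone : ∃ i, f i = 1)
    (hQ : p ∣ f ⬝ᵥ M.map C *ᵥ f) :
    M.IsotropicOver k ∨ ∃ h : k[X], h.Monic ∧ Irreducible h ∧ Odd h.natDegree ∧
      h.natDegree < p.natDegree ∧ M.IsotropicOver (AdjoinRoot h) := by
  obtain ⟨i₀, hi₀⟩ := hone
  obtain ⟨j, -, hj⟩ := Finset.exists_max_image Finset.univ (fun i ↦ (f i).degree)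
    ⟨i₀, Finset.mem_univ _⟩
  have hfj : f j ≠ 0 := by
    intro h0
    simpa [hi₀, h0] using hj i₀ (Finset.mem_univ _)
  set e := (f j).natDegree
  have hle : ∀ i, (f i).natDegree ≤ e :=
    fun i ↦ natDegree_le_natDegree (hj i (Finset.mem_univ _))
  set c : n → k := fun i ↦ (f i).coeff e
  by_cases hc : c ⬝ᵥ M *ᵥ c = 0
  · refine Or.inl (isotropicOver_self_iff.mpr ⟨c, fun h0 ↦ hfj ?_, hc⟩)
    exact leadingCoeff_eq_zero.mp (congrFun h0 j)
  right
  obtain ⟨g, hg⟩ := hQ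
  have hQ0 : f ⬝ᵥ M.map C *ᵥ f ≠ 0 :=
    fun h0 ↦ hc (by rw [← coeff_quadForm_map_C hle, h0, coeff_zero])
  have hg0 : g ≠ 0 := by rintro rfl; exact hQ0 (by rw [hg, mul_zero])
  have hsum : p.natDegree + g.natDegree = e + e := by
    rw [← natDegree_quadForm_map_C hle hc, hg, natDegree_mul (by rintro rfl; simp at hodd) hg0]
  have he : e < p.natDegree := hdeg j
  obtain ⟨h, hmon, hirr, hdvd, hhodd⟩ :=
    exists_monic_irreducible_dvd_of_odd_natDegree (g := g) (by
      rcases hodd with ⟨a, ha⟩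
      exact ⟨e - a - 1, by omega⟩)
  refine ⟨h, hmon, hirr, hhodd, (natDegree_le_of_dvd hdvd hg0).trans_lt (by omega), ?_⟩
  refine isotropicOver_adjoinRoot_of_dvd f ⟨i₀, fun h1 ↦ hirr.not_isUnit ?_⟩ ?_
  · exact isUnit_of_dvd_one (hi₀ ▸ h1)
  · exact hg ▸ hdvd.mul_left p

theorem IsotropicOver.of_adjoinRoot {p : k[X]} (hp : p.Monic) (hirr : Irreducible p)
    (hodd : Odd p.natDegree) (h : M.IsotropicOver (AdjoinRoot p)) : M.IsotropicOver k := by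
  induction hd : p.natDegree using Nat.strong_induction_on generalizing p with
  | _ d ih =>
  obtain ⟨f, hdeg, hone, hQ⟩ := h.exists_lift hp hirr
  obtain hk | ⟨q, hq, hqirr, hqodd, hlt, hqiso⟩ :=
    isotropicOver_or_exists_isotropicOver_adjoinRoot_lt hodd f hdeg hone hQ
  · exact hk
  · exact ih _ (hd ▸ hlt) hq hqirr hqodd hqiso rfl

open IntermediateField in
theorem IsotropicOver.of_adjoin_simple {K : Type*} [Field K] [Algebra k K] {α : K}
    (hα : IsIntegral k α) (hodd : Odd (Module.finrank k k⟮α⟯))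
    (h : M.IsotropicOver k⟮α⟯) : M.IsotropicOver k :=
  (h.map (adjoinRootEquivAdjoin k hα).symm.toAlgHom (AlgEquiv.injective _)).of_adjoinRoot
    (minpoly.monic hα) (minpoly.irreducible hα) (adjoin.finrank hα ▸ hodd)

open IntermediateField in
theorem IsotropicOver.of_odd_finrank {k K : Type u} [Field k] [Field K] [Algebra k K]
    [FiniteDimensional k K] (hodd : Odd (Module.finrank k K)) {M : Matrix n n k}
    (h : M.IsotropicOver K) : M.IsotropicOver k := by
  induction hd : Module.finrank k K using Nat.strong_induction_on generalizing k with
  | _ d ih =>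
  by_cases h1 : Module.finrank k K = 1
  · have hbij := Algebra.finrank_eq_one_iff_bijective_algebraMap.mp h1
    exact h.map (AlgEquiv.ofBijective (Algebra.ofId k K) hbij).symm.toAlgHom
      (AlgEquiv.injective _)
  obtain ⟨α, hα⟩ : ∃ α : K, Module.finrank k k⟮α⟯ ≠ 1 := by
    by_contra! hall
    exact h1 (bot_eq_top_iff_finrank_eq_one.mp (bot_eq_top_of_finrank_adjoin_eq_one hall))
  have htower := Module.finrank_mul_finrank k k⟮α⟯ K
  have hodd' := Nat.odd_mul.mp (htower ▸ hodd)
  have hlt : Module.finrank k⟮α⟯ K < d := by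
    rw [← hd, ← htower]
    have := Module.finrank_pos (R := k) (M := k⟮α⟯)
    exact lt_mul_left Module.finrank_pos (by omega)
  have hL := ih _ hlt hodd'.2 ((isotropicOver_map_algebraMap_iff k⟮α⟯).mpr h) rfl
  exact ((isotropicOver_map_algebraMap_iff k⟮α⟯).mp hL).of_adjoin_simple
    (IsIntegral.of_finite k α) hodd'.1

end Matrix

theorem stmt17_general {k K : Type*} [Field k] [Field K] [Algebra k K]
    [FiniteDimensional k K] (hodd : Odd (Module.finrank k K))
    {m : ℕ}
    (M : Matrix (Fin m) (Fin m) k)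
    (hiso : ∃ w : Fin m → K, w ≠ 0 ∧ w ⬝ᵥ (M.map (algebraMap k K)).mulVec w = 0) :
    ∃ v : Fin m → k, v ≠ 0 ∧ v ⬝ᵥ M.mulVec v = 0 := by
  -- `of_odd_finrank` needs both fields in one universe, so descend to `⊥ ≃ₐ[k] k` first.
  have hK : (M.map (algebraMap k (⊥ : IntermediateField k K))).IsotropicOver K :=
    (isotropicOver_map_algebraMap_iff (M := M) (A := K) _).mpr hiso
  have hbot : M.IsotropicOver (⊥ : IntermediateField k K) :=
    (isotropicOver_map_algebraMap_iff _).mp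
      (hK.of_odd_finrank (by rwa [IntermediateField.finrank_bot']))
  exact isotropicOver_self_iff.mp
    (hbot.map (IntermediateField.botEquiv k K).toAlgHom (AlgEquiv.injective _))

/-- Springer's theorem: let `K/k` be a finite field extension of odd degree, `char k ≠ 2`,
and let `q` be a nondegenerate quadratic form over `k` (Gram matrix `M`).  If `q` is
isotropic over `K`, then `q` is isotropic over `k`. -/
theorem stmt17 {k K : Type*} [Field k] [Field K] [Algebra k K]
    [FiniteDimensional k K] (hodd : Odd (Module.finrank k K))
    (h2 : (2 : k) ≠ 0) {m : ℕ}
    (M : Matrix (Fin m) (Fin m) k) (hs : M.IsSymm) (hnd : M.det ≠ 0)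
    (hiso : ∃ w : Fin m → K, w ≠ 0 ∧ w ⬝ᵥ (M.map (algebraMap k K)).mulVec w = 0) :
    ∃ v : Fin m → k, v ≠ 0 ∧ v ⬝ᵥ M.mulVec v = 0 :=
  stmt17_general hodd M hiso
end
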